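/- arXiv:2211.15602 — 2 statements merged into one kernel-verified Lean document; each statement's English description precedes it below -/
import Mathlib

section
/- Let M = (S, A, T, R, γ) be an n-state, k-action DMDP, let π_1 ≺ π_2 ≺ … ≺ π_ℓ be a sequence of policies in which each π_{i+1} is obtained from π_i by policy improvement with max-gain action selection, and let P = (P^{π_1}_{s_1}, …, P^{π_ℓ}_{s_ℓ}) be an associated sequence of pairwise distinct path-cycles. Then every equivalence class of the terms of P under the relation ≈ has size at most n+1. -/
open scoped Classical
open Finset

/-- Number of directed cycles in a finite directed multigraph on `Fin n`
specified by the edge-multiplicity function `G`: self-loops are cycles of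
length 1, cycles of length `≥ 2` correspond to cyclic permutations, parallel
edges give distinct cycles, and cycles are counted up to cyclic rotation. -/
noncomputable def cycleCount (n : ℕ) (G : Fin n → Fin n → ℕ) : ℕ :=
  (∑ v, G v v) +
  ∑ σ : Equiv.Perm (Fin n), if σ.IsCycle then ∏ v ∈ σ.support, G v (σ v) else 0

/-- Number of path-cycle subgraphs of a finite directed multigraph with
multiplicity function `G`: a path-cycle subgraph is given by a nonempty
vertex set `s` together with a successor map `f` on `s` (extended by the
identity off `s`) whose functional digraph on `s` is weakly connected and
has at most one source (vertex of indegree zero); parallel edges give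
distinct path-cycles. -/
noncomputable def pathCycleCount {V : Type*} [Fintype V] [DecidableEq V]
    (G : V → V → ℕ) : ℕ :=
  ∑ s : Finset V, ∑ f : V → V,
    if s.Nonempty ∧ (∀ v, v ∉ s → f v = v) ∧ (∀ v ∈ s, f v ∈ s) ∧
        (∀ u ∈ s, ∀ v ∈ s,
          Relation.ReflTransGen (fun a b => (a ∈ s ∧ f a = b) ∨ (b ∈ s ∧ f b = a)) u v) ∧
        (s.filter fun v => ∀ u ∈ s, f u ≠ v).card ≤ 1
    then ∏ v ∈ s, G v (f v) else 0

/-- `α(k) = (k - 1 + √((k-1)² + 4)) / 2`. -/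
noncomputable def alphaK (k : ℕ) : ℝ :=
  ((k : ℝ) - 1 + Real.sqrt (((k : ℝ) - 1) ^ 2 + 4)) / 2

/-- Multiplicity function of the digraph `G_{n,k}`: on vertices `Fin n`,
edges `(i, i+1 mod n)` have multiplicity `k - 1` and edges `(i, i+2 mod n)`
have multiplicity `1`. -/
def GnkMult (n k : ℕ) : Fin n → Fin n → ℕ := fun i j =>
  if (j.val + n - i.val) % n = 1 then k - 1
  else if (j.val + n - i.val) % n = 2 then 1
  else 0

/-- Multiplicity function of the digraph `G'_{n,k}`: on vertices `Fin n`,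
edges `(i, i+1 mod n)` have multiplicity `1` and edges `(i, i+2 mod n)`
have multiplicity `k - 1`. -/
def Gnk'Mult (n k : ℕ) : Fin n → Fin n → ℕ := fun i j =>
  if (j.val + n - i.val) % n = 1 then 1
  else if (j.val + n - i.val) % n = 2 then k - 1
  else 0

/-- Edge relation of the simple digraph `G_m`: `(i, j)` is an edge whenever
`j - i ≡ 1 (mod m)` or `j - i ≡ 2 (mod m)`. -/
def GmRel (m : ℕ) : Fin m → Fin m → Prop := fun i j =>
  (j.val + m - i.val) % m = 1 ∨ (j.val + m - i.val) % m = 2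

/-- The sequence `S_m` with `S_0 = 1`, `S_1 = k - 1`,
`S_m = (k-1) S_{m-1} + S_{m-2}`. -/
def Sseq (k : ℕ) : ℕ → ℕ
  | 0 => 1
  | 1 => k - 1
  | (m + 2) => (k - 1) * Sseq k (m + 1) + Sseq k m

/-- `F_k(n)`: the maximum number of directed cycles over all digraphs on `n`
vertices with every outdegree exactly `k` in which every multi-edge between
distinct vertices has multiplicity at most `k - 1`. -/
noncomputable def Fk (k n : ℕ) : ℕ :=
  sSup {c : ℕ | ∃ G : Fin n → Fin n → ℕ,
    (∀ v, (∑ u, G v u) = k) ∧ (∀ u v : Fin n, u ≠ v → G u v ≤ k - 1) ∧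
    c = cycleCount n G}

/-- Weak connectivity (same connected component) in a directed multigraph. -/
def MConn {n : ℕ} (G : Fin n → Fin n → ℕ) : Fin n → Fin n → Prop :=
  Relation.ReflTransGen (fun a b => 0 < G a b ∨ 0 < G b a)

/-- A deterministic Markov decision problem with state space `S`, action
space `A` (all actions available at every state), deterministic transition
function `T`, reward function `R` and discount factor `gamma ∈ [0, 1)`. -/
structure DMDP (S A : Type*) where
  T : S → A → S
  R : S → A → ℝ
  gamma : ℝ
  gamma_nonneg : 0 ≤ gamma
  gamma_lt_one : gamma < 1

namespace DMDP

variable {S A : Type*}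

/-- The trajectory of states obtained by following policy `π` from `s`. -/
def traj (M : DMDP S A) (π : S → A) (s : S) (t : ℕ) : S :=
  (fun x => M.T x (π x))^[t] s

/-- The value function `V^π(s) = Σ_t γ^t R(s_t, π(s_t))`. -/
noncomputable def V (M : DMDP S A) (π : S → A) (s : S) : ℝ :=
  ∑' t : ℕ, M.gamma ^ t * M.R (M.traj π s t) (π (M.traj π s t))

/-- The action value function `Q^π(s, a) = R(s, a) + γ V^π(T(s, a))`. -/
noncomputable def Q (M : DMDP S A) (π : S → A) (s : S) (a : A) : ℝ :=
  M.R s a + M.gamma * M.V π (M.T s a)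

/-- `π ≺ π'`: pointwise `V^π ≤ V^{π'}` with strict inequality somewhere. -/
def PLt (M : DMDP S A) (π π' : S → A) : Prop :=
  (∀ s, M.V π s ≤ M.V π' s) ∧ ∃ s, M.V π s < M.V π' s

/-- `π'` is obtained from `π` by policy improvement with arbitrary action
selection. -/
def ImpStep (M : DMDP S A) (π π' : S → A) : Prop :=
  π' ≠ π ∧ ∀ s, π' s ≠ π s → M.V π s < M.Q π s (π' s)

/-- `π'` is obtained from `π` by policy improvement with max-gain action
selection. -/
def MaxGainStep (M : DMDP S A) (π π' : S → A) : Prop :=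
  π' ≠ π ∧ ∀ s, π' s ≠ π s →
    M.V π s < M.Q π s (π' s) ∧
    ∀ a, M.V π s < M.Q π s a → M.Q π s a ≤ M.Q π s (π' s)

/-- The first time step at which a previously visited state recurs on the
trajectory of `π` from `s`. -/
noncomputable def pcLen (M : DMDP S A) (π : S → A) (s : S) : ℕ :=
  sInf {t : ℕ | ∃ t' < t, M.traj π s t' = M.traj π s t}

/-- The path-cycle `P^π_s`: the sequence of state–action–state triples
`(s_t, π(s_t), s_{t+1})` for `t` up to (but excluding) the first recurrence
of a previously visited state. -/
noncomputable def pathCycle (M : DMDP S A) (π : S → A) (s : S) : List (S × A × S) :=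
  (List.range (M.pcLen π s)).map fun t =>
    (M.traj π s t, π (M.traj π s t), M.traj π s (t + 1))

/-- The multiplicity function of the DMDP digraph `G_M`: one edge from `s`
to `T(s, a)` for every action `a`. -/
noncomputable def digraph (M : DMDP S A) [Fintype A] : S → S → ℕ :=
  fun s s' => (Finset.univ.filter fun a => M.T s a = s').card

/-- A state is non-branching if all actions lead to the same next state. -/
def NonBranching (M : DMDP S A) (s : S) : Prop := ∃ s', ∀ a, M.T s a = s'

/-- The relation `∼` on path-cycles: same sequence of states, and wherever
the actions differ the state is non-branching. -/
def PCSim (M : DMDP S A) (P₁ P₂ : List (S × A × S)) : Prop :=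
  P₁.length = P₂.length ∧
  ∀ (t : ℕ) (h₁ : t < P₁.length) (h₂ : t < P₂.length),
    (P₁.get ⟨t, h₁⟩).1 = (P₂.get ⟨t, h₂⟩).1 ∧
    (P₁.get ⟨t, h₁⟩).2.2 = (P₂.get ⟨t, h₂⟩).2.2 ∧
    ((P₁.get ⟨t, h₁⟩).2.1 ≠ (P₂.get ⟨t, h₂⟩).2.1 → M.NonBranching (P₁.get ⟨t, h₁⟩).1)

/-- The relation `≈` on path-cycles: they differ only in equivalent edges,
i.e. have the same sequences of source and target states. -/
def PCApprox (_M : DMDP S A) (P₁ P₂ : List (S × A × S)) : Prop :=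
  P₁.length = P₂.length ∧
  ∀ (t : ℕ) (h₁ : t < P₁.length) (h₂ : t < P₂.length),
    (P₁.get ⟨t, h₁⟩).1 = (P₂.get ⟨t, h₂⟩).1 ∧
    (P₁.get ⟨t, h₁⟩).2.2 = (P₂.get ⟨t, h₂⟩).2.2

end DMDP

section Aux

set_option linter.unusedSectionVars false

variable {S A : Type*} [Fintype S] [Nonempty S] [Fintype A] [Nonempty A] (M : DMDP S A)

lemma traj_zero (π : S → A) (s : S) : M.traj π s 0 = s := rfl

lemma traj_succ' (π : S → A) (s : S) (t : ℕ) :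
    M.traj π s (t + 1) = M.T (M.traj π s t) (π (M.traj π s t)) :=
  Function.iterate_succ_apply' _ t s

lemma traj_add (π : S → A) (s : S) (t u : ℕ) :
    M.traj π s (t + u) = M.traj π (M.traj π s u) t :=
  Function.iterate_add_apply _ t u s

lemma exists_R_bound : ∃ C : ℝ, ∀ s a, |M.R s a| ≤ C := by
  obtain ⟨⟨s₀, a₀⟩⟩ : Nonempty (S × A) := inferInstance
  refine ⟨(Finset.univ.image fun p : S × A => |M.R p.1 p.2|).max' ⟨|M.R s₀ a₀|, by simp⟩, ?_⟩
  intro s a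
  exact Finset.le_max' _ _ (Finset.mem_image.2 ⟨(s, a), by simp⟩)

lemma summable_V (π : S → A) (s : S) :
    Summable (fun t : ℕ => M.gamma ^ t * M.R (M.traj π s t) (π (M.traj π s t))) := by
  obtain ⟨C, hC⟩ := exists_R_bound M
  refine Summable.of_norm_bounded (g := fun t => M.gamma ^ t * C)
    ((summable_geometric_of_lt_one M.gamma_nonneg M.gamma_lt_one).mul_right C) ?_
  intro t
  rw [Real.norm_eq_abs, abs_mul, abs_pow, abs_of_nonneg M.gamma_nonneg]
  exact mul_le_mul_of_nonneg_left (hC _ _) (pow_nonneg M.gamma_nonneg t)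

lemma bellman (π : S → A) (s : S) :
    M.V π s = M.R s (π s) + M.gamma * M.V π (M.T s (π s)) := by
  have hs := summable_V M π s
  rw [DMDP.V, Summable.tsum_eq_zero_add hs]
  simp only [pow_zero, one_mul, traj_zero]
  congr 1
  have hshift : ∀ t : ℕ, M.traj π s (t + 1) = M.traj π (M.T s (π s)) t := by
    intro t
    show (fun x => M.T x (π x))^[t + 1] s = _
    rw [Function.iterate_succ_apply]
    rfl
  calc ∑' t : ℕ, M.gamma ^ (t + 1) * M.R (M.traj π s (t + 1)) (π (M.traj π s (t + 1)))
      = ∑' t : ℕ, M.gamma * (M.gamma ^ t *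
          M.R (M.traj π (M.T s (π s)) t) (π (M.traj π (M.T s (π s)) t))) := by
        refine tsum_congr fun t => ?_
        rw [hshift t]; ring
    _ = M.gamma * M.V π (M.T s (π s)) := by rw [tsum_mul_left]; rfl

lemma V_mono (ℓ : ℕ) (π : ℕ → S → A)
    (hchain : ∀ i, i + 1 < ℓ → M.PLt (π i) (π (i + 1)))
    {i j : ℕ} (hij : i ≤ j) (hj : j < ℓ) (s : S) : M.V (π i) s ≤ M.V (π j) s := by
  induction j, hij using Nat.le_induction with
  | base => exact le_rfl
  | succ j hij ih =>
    exact le_trans (ih (by omega)) ((hchain j hj).1 s)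

lemma V_lt_of_change (ℓ : ℕ) (π : ℕ → S → A)
    (hchain : ∀ i, i + 1 < ℓ → M.PLt (π i) (π (i + 1)))
    (hstep : ∀ i, i + 1 < ℓ → M.MaxGainStep (π i) (π (i + 1)))
    {m : ℕ} (hm : m + 1 < ℓ) {x : S}
    (hx : π (m + 1) x ≠ π m x) : M.V (π m) x < M.V (π (m + 1)) x := by
  have h1 : M.V (π m) x < M.Q (π m) x (π (m + 1) x) := ((hstep m hm).2 x hx).1
  have h2 : M.Q (π m) x (π (m + 1) x) ≤ M.V (π (m + 1)) x := by
    rw [DMDP.Q, bellman M (π (m + 1)) x]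
    have hmono := (hchain m hm).1 (M.T x (π (m + 1) x))
    have := mul_le_mul_of_nonneg_left hmono M.gamma_nonneg
    linarith
  linarith

lemma maxgain_reward (ℓ : ℕ) (π : ℕ → S → A)
    (hstep : ∀ i, i + 1 < ℓ → M.MaxGainStep (π i) (π (i + 1)))
    {m : ℕ} (hm : m + 1 < ℓ) {x : S} (hx : π (m + 1) x ≠ π m x)
    (a : A) (ha : M.T x a = M.T x (π (m + 1) x)) :
    M.R x a ≤ M.R x (π (m + 1) x) := by
  obtain ⟨h1, h2⟩ := (hstep m hm).2 x hx
  by_cases hq : M.V (π m) x < M.Q (π m) x a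
  · have := h2 a hq
    rw [DMDP.Q, DMDP.Q, ha] at this
    linarith
  · push_neg at hq
    have := lt_of_le_of_lt hq h1
    rw [DMDP.Q, DMDP.Q, ha] at this
    linarith

lemma exists_last_change (π : ℕ → S → A) {i j : ℕ} (hij : i ≤ j) (x : S)
    (hne : π i x ≠ π j x) :
    ∃ m, i ≤ m ∧ m < j ∧ π (m + 1) x = π j x ∧ π (m + 1) x ≠ π m x := by
  induction j, hij using Nat.le_induction with
  | base => exact absurd rfl hne
  | succ j hij ih =>
    by_cases h : π (j + 1) x = π j x
    · obtain ⟨m, h1, h2, h3, h4⟩ := ih (fun he => hne (he.trans h.symm))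
      exact ⟨m, h1, by omega, h3.trans h.symm, h4⟩
    · exact ⟨j, hij, Nat.lt_succ_self j, rfl, h⟩

lemma exists_recur (π : S → A) (s : S) :
    ∃ b, b ≤ Fintype.card S ∧ ∃ t' < b, M.traj π s t' = M.traj π s b := by
  have hcard : Fintype.card S < Fintype.card (Fin (Fintype.card S + 1)) := by simp
  obtain ⟨a, b, hab, he⟩ :=
    Fintype.exists_ne_map_eq_of_card_lt (fun t : Fin (Fintype.card S + 1) => M.traj π s t) hcard
  rcases lt_or_gt_of_ne hab with h | h
  · exact ⟨b, by omega, a, h, he⟩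
  · exact ⟨a, by omega, b, h, he.symm⟩

lemma recur_nonempty (π : S → A) (s : S) :
    {t : ℕ | ∃ t' < t, M.traj π s t' = M.traj π s t}.Nonempty := by
  obtain ⟨b, _, hb⟩ := exists_recur M π s
  exact ⟨b, hb⟩

lemma pcLen_le (π : S → A) (s : S) : M.pcLen π s ≤ Fintype.card S := by
  obtain ⟨b, hbn, hb⟩ := exists_recur M π s
  exact le_trans (Nat.sInf_le hb) hbn

lemma pcLen_mem (π : S → A) (s : S) :
    ∃ t' < M.pcLen π s, M.traj π s t' = M.traj π s (M.pcLen π s) :=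
  Nat.sInf_mem (recur_nonempty M π s)

lemma pcLen_pos (π : S → A) (s : S) : 0 < M.pcLen π s := by
  rcases Nat.eq_zero_or_pos (M.pcLen π s) with h | h
  · obtain ⟨t', ht', _⟩ := pcLen_mem M π s
    omega
  · exact h

lemma pathCycle_length (π : S → A) (s : S) :
    (M.pathCycle π s).length = M.pcLen π s := by
  simp [DMDP.pathCycle]

lemma pathCycle_get (π : S → A) (s : S) (t : ℕ) (h : t < (M.pathCycle π s).length) :
    (M.pathCycle π s).get ⟨t, h⟩
      = (M.traj π s t, π (M.traj π s t), M.traj π s (t + 1)) := by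
  simp [DMDP.pathCycle, List.get_eq_getElem]

lemma traj_eq_of_agree (πa πb : S → A) (sa sb : S) (L t₀ : ℕ) (ht₀ : t₀ < L)
    (hab : ∀ u ≤ L, M.traj πa sa u = M.traj πb sb u)
    (hrec : M.traj πa sa L = M.traj πa sa t₀) :
    ∀ u, M.traj πa sa u = M.traj πb sb u ∧ ∃ v < L, M.traj πa sa u = M.traj πa sa v := by
  intro u
  induction u using Nat.strong_induction_on with
  | _ u ih =>
    rcases le_or_gt u L with hu | hu
    · refine ⟨hab u hu, ?_⟩
      rcases lt_or_eq_of_le hu with h | h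
      · exact ⟨u, h, rfl⟩
      · exact ⟨t₀, ht₀, by rw [h, hrec]⟩
    · obtain ⟨w, rfl⟩ : ∃ w, u = w + L := ⟨u - L, by omega⟩
      have ha' : M.traj πa sa (w + L) = M.traj πa sa (w + t₀) := by
        rw [traj_add, traj_add, hrec]
      have hbL : M.traj πb sb L = M.traj πb sb t₀ := by
        rw [← hab L le_rfl, ← hab t₀ ht₀.le, hrec]
      have hb' : M.traj πb sb (w + L) = M.traj πb sb (w + t₀) := by
        rw [traj_add, traj_add, hbL]
      obtain ⟨h1, v, hv, h2⟩ := ih (w + t₀) (by omega)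
      exact ⟨by rw [ha', hb', h1], ⟨v, hv, by rw [ha', h2]⟩⟩

lemma V_eq_of_rewards (πa πb : S → A) (sa sb : S) (L t₀ : ℕ) (ht₀ : t₀ < L)
    (hab : ∀ u ≤ L, M.traj πa sa u = M.traj πb sb u)
    (hrec : M.traj πa sa L = M.traj πa sa t₀)
    (hR : ∀ v < L, M.R (M.traj πa sa v) (πa (M.traj πa sa v))
        = M.R (M.traj πa sa v) (πb (M.traj πa sa v)))
    (t : ℕ) :
    M.V πa (M.traj πa sa t) = M.V πb (M.traj πb sb t) := by
  have key := traj_eq_of_agree M πa πb sa sb L t₀ ht₀ hab hrec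
  rw [DMDP.V, DMDP.V]
  refine tsum_congr fun u => ?_
  have h1 : M.traj πa (M.traj πa sa t) u = M.traj πa sa (u + t) := (traj_add M πa sa u t).symm
  have h2 : M.traj πb (M.traj πb sb t) u = M.traj πb sb (u + t) := (traj_add M πb sb u t).symm
  obtain ⟨heq, v, hv, hval⟩ := key (u + t)
  rw [h1, h2, ← heq, hval, hR v hv]

end Aux

theorem stmt_15 {S A : Type*} [Fintype S] [Nonempty S] [Fintype A] [Nonempty A]
    (M : DMDP S A) (n k : ℕ) (hn : Fintype.card S = n) (hk : Fintype.card A = k)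
    (ℓ : ℕ) (π : ℕ → S → A) (σ : ℕ → S)
    (hchain : ∀ i, i + 1 < ℓ → M.PLt (π i) (π (i + 1)))
    (hstep : ∀ i, i + 1 < ℓ → M.MaxGainStep (π i) (π (i + 1)))
    (hassoc : ∀ i < ℓ, ∀ j < i, ∀ s' : S,
        M.pathCycle (π i) (σ i) ≠ M.pathCycle (π j) s') :
    ∀ i₀ < ℓ, ((Finset.range ℓ).filter fun i =>
        M.PCApprox (M.pathCycle (π i) (σ i)) (M.pathCycle (π i₀) (σ i₀))).card ≤ n + 1 := by
  intro i₀ hi₀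
  classical
  set L := M.pcLen (π i₀) (σ i₀) with hLdef
  set s_ : ℕ → S := fun t => M.traj (π i₀) (σ i₀) t with hs_def
  set C := (Finset.range ℓ).filter (fun i =>
      M.PCApprox (M.pathCycle (π i) (σ i)) (M.pathCycle (π i₀) (σ i₀))) with hCdef
  show C.card ≤ n + 1
  have hLn : L ≤ n := hn ▸ pcLen_le M _ _
  have hLpos : 0 < L := pcLen_pos M _ _
  have memlt : ∀ i ∈ C, i < ℓ := fun i hi => Finset.mem_range.1 (Finset.mem_filter.1 hi).1
  have memapp : ∀ i ∈ C, M.PCApprox (M.pathCycle (π i) (σ i)) (M.pathCycle (π i₀) (σ i₀)) :=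
    fun i hi => (Finset.mem_filter.1 hi).2
  have memlen : ∀ i ∈ C, M.pcLen (π i) (σ i) = L := by
    intro i hi
    have h := (memapp i hi).1
    rwa [pathCycle_length, pathCycle_length] at h
  have memtraj : ∀ i ∈ C, ∀ t ≤ L, M.traj (π i) (σ i) t = s_ t := by
    intro i hi t ht
    have happ := (memapp i hi).2
    rcases Nat.eq_zero_or_pos t with rfl | hpos
    · have h₁ : 0 < (M.pathCycle (π i) (σ i)).length := by
        rw [pathCycle_length, memlen i hi]; exact hLpos
      have h₂ : 0 < (M.pathCycle (π i₀) (σ i₀)).length := by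
        rw [pathCycle_length]; exact hLpos
      have h := (happ 0 h₁ h₂).1
      rw [pathCycle_get, pathCycle_get] at h
      exact h
    · obtain ⟨u, rfl⟩ := Nat.exists_eq_succ_of_ne_zero (by omega : t ≠ 0)
      have hu : u < L := by omega
      have h₁ : u < (M.pathCycle (π i) (σ i)).length := by
        rw [pathCycle_length, memlen i hi]; exact hu
      have h₂ : u < (M.pathCycle (π i₀) (σ i₀)).length := by
        rw [pathCycle_length]; exact hu
      have h := (happ u h₁ h₂).2
      rw [pathCycle_get, pathCycle_get] at h
      exact h
  have hedge : ∀ i ∈ C, ∀ v, v < L → M.T (s_ v) (π i (s_ v)) = s_ (v + 1) := by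
    intro i hi v hv
    have h1 := memtraj i hi v hv.le
    have h2 := memtraj i hi (v + 1) (by omega)
    rw [← h1, ← h2, traj_succ' M]
  set r : ℕ → ℕ → ℝ := fun i v => M.R (s_ v) (π i (s_ v)) with hrdef
  have hdiff : ∀ i ∈ C, ∀ j ∈ C, i < j → ∃ t, t < L ∧ π i (s_ t) ≠ π j (s_ t) := by
    intro i hi j hj hij
    by_contra h
    push_neg at h
    refine hassoc j (memlt j hj) i hij (σ i) ?_
    refine List.ext_get ?_ ?_
    · rw [pathCycle_length, pathCycle_length, memlen j hj, memlen i hi]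
    · intro t h₁ h₂
      have ht : t < L := by rw [pathCycle_length, memlen j hj] at h₁; exact h₁
      rw [pathCycle_get, pathCycle_get,
        memtraj i hi t ht.le, memtraj j hj t ht.le,
        memtraj i hi (t + 1) (by omega), memtraj j hj (t + 1) (by omega), h t ht]
  have hwmax : ∀ i ∈ C, ∀ j ∈ C, i < j → ∀ v, v < L → π i (s_ v) ≠ π j (s_ v) →
      ∀ a, M.T (s_ v) a = s_ (v + 1) → M.R (s_ v) a ≤ r j v := by
    intro i hi j hj hij v hv hne a ha
    obtain ⟨m, him, hmj, heq, hch⟩ := exists_last_change π hij.le (s_ v) hne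
    have hm1 : m + 1 < ℓ := by have := memlt j hj; omega
    have hta : M.T (s_ v) a = M.T (s_ v) (π (m + 1) (s_ v)) := by
      rw [heq, hedge j hj v hv, ha]
    have h := maxgain_reward M ℓ π hstep hm1 hch a hta
    rw [heq] at h
    exact h
  have hmono : ∀ i ∈ C, ∀ j ∈ C, i ≤ j → ∀ v, v < L → r i v ≤ r j v := by
    intro i hi j hj hij v hv
    rcases eq_or_ne (π i (s_ v)) (π j (s_ v)) with he | he
    · have : r i v = r j v := by
        show M.R (s_ v) (π i (s_ v)) = M.R (s_ v) (π j (s_ v))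
        rw [he]
      exact this.le
    · have hij' : i < j := lt_of_le_of_ne hij (by rintro rfl; exact he rfl)
      exact hwmax i hi j hj hij' v hv he _ (hedge i hi v hv)
  have hE1 : ∀ i ∈ C, ∀ j ∈ C, i < j → ∃ v, v < L ∧ r i v < r j v := by
    intro i hi j hj hij
    obtain ⟨t, ht, hne⟩ := hdiff i hi j hj hij
    obtain ⟨m, him, hmj, -, hch⟩ := exists_last_change π hij.le (s_ t) hne
    have hjℓ := memlt j hj
    have hm1 : m + 1 < ℓ := by omega
    have hVlt : M.V (π i) (s_ t) < M.V (π j) (s_ t) := by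
      have h1 : M.V (π i) (s_ t) ≤ M.V (π m) (s_ t) := V_mono M ℓ π hchain him (by omega) _
      have h2 := V_lt_of_change M ℓ π hchain hstep hm1 hch
      have h3 : M.V (π (m + 1)) (s_ t) ≤ M.V (π j) (s_ t) :=
        V_mono M ℓ π hchain (by omega) hjℓ _
      linarith
    by_contra hcon
    push_neg at hcon
    have hreq : ∀ v, v < L → r i v = r j v := fun v hv =>
      le_antisymm (hmono i hi j hj hij.le v hv) (hcon v hv)
    obtain ⟨t₀, ht₀, hrec⟩ := pcLen_mem M (π i) (σ i)
    rw [memlen i hi] at ht₀ hrec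
    have hVeq := V_eq_of_rewards M (π i) (π j) (σ i) (σ j) L t₀ ht₀
      (fun u hu => (memtraj i hi u hu).trans (memtraj j hj u hu).symm)
      hrec.symm
      (fun v hv => by rw [memtraj i hi v hv.le]; exact hreq v hv)
      t
    rw [memtraj i hi t ht.le, memtraj j hj t ht.le] at hVeq
    exact absurd hVeq (ne_of_lt hVlt)
  by_cases hsmall : C.card ≤ 1
  · omega
  push_neg at hsmall
  have hCne : C.Nonempty := Finset.card_pos.1 (by omega)
  set m₀ := C.min' hCne with hm₀def
  have hm₀C : m₀ ∈ C := Finset.min'_mem _ _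
  have hkey : ∀ i ∈ C.erase m₀, ∃ v, v < L ∧ ∀ j ∈ C, j < i → r j v < r i v := by
    intro i hi
    have hiC : i ∈ C := Finset.mem_of_mem_erase hi
    have hm₀lt : m₀ < i :=
      lt_of_le_of_ne (Finset.min'_le _ _ hiC) (Ne.symm (Finset.ne_of_mem_erase hi))
    have hDne : (C.filter (· < i)).Nonempty := ⟨m₀, Finset.mem_filter.2 ⟨hm₀C, hm₀lt⟩⟩
    set p := (C.filter (· < i)).max' hDne with hpdef
    have hpmem := Finset.max'_mem _ hDne
    rw [Finset.mem_filter] at hpmem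
    obtain ⟨hpC, hpi⟩ := hpmem
    obtain ⟨v, hv, hlt⟩ := hE1 p hpC i hiC hpi
    refine ⟨v, hv, fun j hj hji => lt_of_le_of_lt (hmono j hj p hpC ?_ v hv) hlt⟩
    exact Finset.le_max' (C.filter (· < i)) j (Finset.mem_filter.2 ⟨hj, hji⟩)
  choose! f hf1 hf2 using hkey
  have hstep2 : ∀ a ∈ C.erase m₀, ∀ b ∈ C.erase m₀, a < b → f a ≠ f b := by
    intro a ha b hb hab hfab
    have haC : a ∈ C := Finset.mem_of_mem_erase ha
    have hbC : b ∈ C := Finset.mem_of_mem_erase hb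
    set v := f a with hvdef
    have hva : v < L := hf1 a ha
    have hm₀lt_a : m₀ < a :=
      lt_of_le_of_ne (Finset.min'_le _ _ haC) (Ne.symm (Finset.ne_of_mem_erase ha))
    have h1 : r m₀ v < r a v := hf2 a ha m₀ hm₀C hm₀lt_a
    have hneact : π m₀ (s_ v) ≠ π a (s_ v) := by
      intro he
      have : r m₀ v = r a v := by
        show M.R (s_ v) (π m₀ (s_ v)) = M.R (s_ v) (π a (s_ v))
        rw [he]
      exact absurd this h1.ne
    have hble : r b v ≤ r a v :=
      hwmax m₀ hm₀C a haC hm₀lt_a v hva hneact (π b (s_ v)) (hedge b hbC v hva)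
    have h2 : r a v < r b v := by
      have h := hf2 b hb a haC hab
      rwa [← hfab] at h
    linarith
  have hinj : Set.InjOn f (C.erase m₀) := by
    intro a ha b hb hfab
    have ha' : a ∈ C.erase m₀ := ha
    have hb' : b ∈ C.erase m₀ := hb
    rcases lt_trichotomy a b with h | h | h
    · exact absurd hfab (hstep2 a ha' b hb' h)
    · exact h
    · exact absurd hfab.symm (hstep2 b hb' a ha' h)
  have hcard1 : (C.erase m₀).card ≤ L := by
    have hmaps : ∀ i ∈ C.erase m₀, f i ∈ Finset.range L :=
      fun i hi => Finset.mem_range.2 (hf1 i hi)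
    calc (C.erase m₀).card ≤ (Finset.range L).card :=
          Finset.card_le_card_of_injOn f hmaps hinj
      _ = L := Finset.card_range L
  have hcerase := Finset.card_erase_of_mem hm₀C
  omega
end

section
/- Let M = (S, A, T, R, γ) be a DMDP with |S| = 2 states and |A| = k ≥ 2 actions. Then every sequence of policies π_0 ≺ π_1 ≺ … ≺ π_ℓ in which each π_{i+1} is obtained from π_i by policy improvement with arbitrary action selection contains at most k²/2 + 2k − 1 policies; i.e., ℓ + 1 ≤ k²/2 + 2k − 1. In particular, any policy iteration algorithm started from any initial policy on M evaluates at most k²/2 + 2k − 1 policies. -/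
open scoped Classical
open Finset

section StmtAux

variable {S A : Type*} [Fintype S] [Fintype A]

private lemma stmt18_summable (M : DMDP S A) (π : S → A) (s : S) :
    Summable (fun t : ℕ => M.gamma ^ t * M.R (M.traj π s t) (π (M.traj π s t))) := by
  have hC : ∀ x : S, |M.R x (π x)| ≤ ∑ y : S, |M.R y (π y)| := fun x =>
    Finset.single_le_sum (f := fun y => |M.R y (π y)|) (fun y _ => abs_nonneg _)
      (Finset.mem_univ x)
  refine Summable.of_norm_bounded (g := fun t => (∑ y : S, |M.R y (π y)|) * M.gamma ^ t)
    (Summable.mul_left _ (summable_geometric_of_lt_one M.gamma_nonneg M.gamma_lt_one)) ?_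
  intro t
  rw [Real.norm_eq_abs, abs_mul, abs_pow, abs_of_nonneg M.gamma_nonneg, mul_comm]
  exact mul_le_mul_of_nonneg_right (hC _) (pow_nonneg M.gamma_nonneg t)

private lemma stmt18_bellman (M : DMDP S A) (π : S → A) (s : S) :
    M.V π s = M.R s (π s) + M.gamma * M.V π (M.T s (π s)) := by
  have h0 := Summable.tsum_eq_zero_add (stmt18_summable M π s)
  have htraj : ∀ t, M.traj π s (t + 1) = M.traj π (M.T s (π s)) t := by
    intro t
    simp [DMDP.traj, Function.iterate_succ_apply]
  have h1 : M.traj π s 0 = s := rfl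
  rw [DMDP.V, h0, h1, pow_zero, one_mul]
  congr 1
  rw [DMDP.V, ← tsum_mul_left]
  exact tsum_congr fun t => by rw [htraj t]; ring

private lemma stmt18_q_mono (M : DMDP S A) {π π' : S → A} (h : ∀ s, M.V π s ≤ M.V π' s)
    (s : S) (a : A) : M.Q π s a ≤ M.Q π' s a := by
  unfold DMDP.Q
  have := mul_le_mul_of_nonneg_left (h (M.T s a)) M.gamma_nonneg
  linarith

private lemma stmt18_loop_V_eq (M : DMDP S A) {π π' : S → A} {u : S}
    (ha : M.T u (π u) = u) (h2 : π' u = π u) : M.V π u = M.V π' u := by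
  have b1 := stmt18_bellman M π u
  rw [ha] at b1
  have b2 := stmt18_bellman M π' u
  rw [h2, ha] at b2
  have h3 : (1 - M.gamma) * (M.V π u - M.V π' u) = 0 := by linear_combination b1 - b2
  have h4 : (1 : ℝ) - M.gamma ≠ 0 := by have := M.gamma_lt_one; intro h; linarith
  rcases mul_eq_zero.mp h3 with h | h
  · exact absurd h h4
  · linarith

private lemma stmt18_key (M : DMDP S A) (ℓ : ℕ) (π : ℕ → S → A)
    (hchain : ∀ i < ℓ, M.PLt (π i) (π (i + 1)))
    (hstep : ∀ i < ℓ, M.ImpStep (π i) (π (i + 1)))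
    (u v : S) (hcover : ∀ s : S, s = u ∨ s = v) :
    ((Finset.range ℓ).filter fun i => π (i + 1) u ≠ π i u).card ≤
      (Fintype.card A - 1) +
        ((Finset.univ.filter fun a : A => M.T u a = u).card *
          (Finset.univ.filter fun a : A => ¬ M.T u a = u).card) := by
  classical
  set Cu : Finset ℕ := (Finset.range ℓ).filter (fun i => π (i + 1) u ≠ π i u) with hCu
  set Lset : Finset A := Finset.univ.filter (fun a : A => M.T u a = u) with hLset
  set Cset : Finset A := Finset.univ.filter (fun a : A => ¬ M.T u a = u) with hCset
  have hPQ : Lset.card + Cset.card = Fintype.card A := by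
    rw [hLset, hCset, Finset.card_filter_add_card_filter_not, Finset.card_univ]
  have hCuMem : ∀ m, m ∈ Cu ↔ (m < ℓ ∧ π (m + 1) u ≠ π m u) := by
    intro m; rw [hCu, Finset.mem_filter, Finset.mem_range]
  -- monotonicity of values along the chain
  have mono : ∀ j, j ≤ ℓ → ∀ i, i ≤ j → ∀ s, M.V (π i) s ≤ M.V (π j) s := by
    intro j
    induction j with
    | zero => intro _ i hi s; obtain rfl : i = 0 := Nat.le_zero.mp hi; exact le_rfl
    | succ j ih =>
      intro hj i hi s
      rcases Nat.eq_or_lt_of_le hi with h | h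
      · rw [h]
      · exact le_trans (ih (by omega) i (by omega) s) ((hchain j (by omega)).1 s)
  have strict1 : ∀ m ∈ Cu, M.V (π m) u < M.V (π (m + 1)) u := by
    intro m hm
    obtain ⟨hml, hne⟩ := (hCuMem m).mp hm
    calc M.V (π m) u < M.Q (π m) u (π (m + 1) u) := (hstep m hml).2 u hne
      _ ≤ M.Q (π (m + 1)) u (π (m + 1) u) := stmt18_q_mono M (hchain m hml).1 u _
      _ = M.V (π (m + 1)) u := by
          unfold DMDP.Q
          exact (stmt18_bellman M (π (m + 1)) u).symm
  have strictij : ∀ i m j, i ≤ m → m ∈ Cu → m < j → j ≤ ℓ →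
      M.V (π i) u < M.V (π j) u := by
    intro i m j him hm hmj hjl
    have hml : m < ℓ := ((hCuMem m).mp hm).1
    calc M.V (π i) u ≤ M.V (π m) u := mono m (le_of_lt hml) i him u
      _ < M.V (π (m + 1)) u := strict1 m hm
      _ ≤ M.V (π j) u := mono j hjl (m + 1) (by omega) u
  set TL : Finset ℕ := Cu.filter (fun i => M.T u (π (i + 1) u) = u) with hTL
  set TC : Finset ℕ := Cu.filter (fun i => ¬ M.T u (π (i + 1) u) = u) with hTC
  have hsplit : TL.card + TC.card = Cu.card := by
    rw [hTL, hTC]; exact Finset.card_filter_add_card_filter_not _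
  have hTCmem : ∀ i ∈ TC, i ∈ Cu ∧ ¬ M.T u (π (i + 1) u) = u :=
    fun i hi => Finset.mem_filter.mp hi
  have hTLmem : ∀ i ∈ TL, i ∈ Cu ∧ M.T u (π (i + 1) u) = u :=
    fun i hi => Finset.mem_filter.mp hi
  -- self-loop actions are used in at most one run
  have TLne : ∀ i j, i ∈ TL → j ∈ TL → i < j → π (i + 1) u ≠ π (j + 1) u := by
    intro i j hi hj hij heq
    have hjCu := (hTLmem j hj).1
    have heqV : M.V (π (j + 1)) u = M.V (π (i + 1)) u :=
      stmt18_loop_V_eq M (hTLmem j hj).2 heq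
    have hjl : j < ℓ := ((hCuMem j).mp hjCu).1
    have hlt := strictij (i + 1) j (j + 1) (by omega) hjCu (by omega) (by omega)
    linarith [heqV]
  have TLinj : Set.InjOn (fun i => π (i + 1) u) ↑TL := by
    intro i hi j hj heq
    by_contra hne
    rcases lt_or_gt_of_ne hne with h | h
    · exact TLne i j (Finset.mem_coe.mp hi) (Finset.mem_coe.mp hj) h heq
    · exact TLne j i (Finset.mem_coe.mp hj) (Finset.mem_coe.mp hi) h heq.symm
  have hTLcard : TL.card ≤ Lset.card :=
    Finset.card_le_card_of_injOn (fun i => π (i + 1) u)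
      (fun i hi => Finset.mem_filter.mpr ⟨Finset.mem_univ _, (hTLmem i hi).2⟩) TLinj
  -- one improvement step from a cross action strictly increases the reward
  have adj : ∀ j ∈ TC, ¬ M.T u (π j u) = u → M.R u (π j u) < M.R u (π (j + 1) u) := by
    intro j hj hcross
    obtain ⟨hjCu, hjcross⟩ := hTCmem j hj
    obtain ⟨hjl, hjne⟩ := (hCuMem j).mp hjCu
    have hq := (hstep j hjl).2 u hjne
    have hb := stmt18_bellman M (π j) u
    have h1 : M.T u (π j u) = v := (hcover _).resolve_left hcross
    have h2 : M.T u (π (j + 1) u) = v := (hcover _).resolve_left hjcross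
    rw [h1] at hb
    unfold DMDP.Q at hq
    rw [h2] at hq
    linarith
  -- if there is no change at u in [i, j), the action at u is stable
  have stable : ∀ i j, i ≤ j → j ≤ ℓ →
      (∀ m ∈ Cu, i ≤ m → m < j → False) → π j u = π i u := by
    intro i j
    induction j with
    | zero => intro h _ _; obtain rfl : i = 0 := Nat.le_zero.mp h; rfl
    | succ j ihj =>
      intro hij hjl hno
      by_cases he : i = j + 1
      · rw [he]
      · have h1 : i ≤ j := by omega
        have hs : π (j + 1) u = π j u := by
          by_contra hc
          exact hno j ((hCuMem j).mpr ⟨by omega, hc⟩) h1 (by omega)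
        rw [hs]
        exact ihj h1 (by omega) (fun m hm ha hb => hno m hm ha (by omega))
  -- claim A: along consecutive cross changes the rewards strictly increase
  have clA : ∀ j, ∀ i, i ∈ TC → j ∈ TC → i < j →
      (∀ m ∈ Cu, i < m → m < j → m ∈ TC) →
      M.R u (π (i + 1) u) < M.R u (π (j + 1) u) := by
    intro j
    induction j using Nat.strong_induction_on with
    | _ j ih =>
      intro i hi hj hij hbet
      have hjl : j < ℓ := ((hCuMem j).mp (hTCmem j hj).1).1
      by_cases hne : (Cu.filter fun x => i < x ∧ x < j).Nonempty
      · obtain ⟨m, hmmem, hmmax⟩ : ∃ m, m ∈ Cu.filter (fun x => i < x ∧ x < j) ∧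
            ∀ x ∈ Cu.filter (fun x => i < x ∧ x < j), x ≤ m :=
          ⟨_, Finset.max'_mem _ hne, fun x hx => Finset.le_max' _ x hx⟩
        rw [Finset.mem_filter] at hmmem
        have hmCu := hmmem.1
        have him : i < m := hmmem.2.1
        have hmj : m < j := hmmem.2.2
        have hmTC : m ∈ TC := hbet m hmCu him hmj
        have ha : M.R u (π (i + 1) u) < M.R u (π (m + 1) u) :=
          ih m hmj i hi hmTC him (fun m' hm' h1 h2 => hbet m' hm' h1 (by omega))
        have hst : π j u = π (m + 1) u := by
          apply stable (m + 1) j (by omega) (by omega)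
          intro m' hm' ha' hb'
          have := hmmax m' (Finset.mem_filter.mpr ⟨hm', by omega, hb'⟩)
          omega
        have hcross : ¬ M.T u (π j u) = u := by rw [hst]; exact (hTCmem m hmTC).2
        have hb := adj j hj hcross
        rw [hst] at hb
        exact lt_trans ha hb
      · have hst : π j u = π (i + 1) u := by
          apply stable (i + 1) j (by omega) (by omega)
          intro m' hm' h1 h2
          exact hne ⟨m', Finset.mem_filter.mpr ⟨hm', by omega, h2⟩⟩
        have hcross : ¬ M.T u (π j u) = u := by rw [hst]; exact (hTCmem i hi).2
        have hb := adj j hj hcross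
        rw [hst] at hb
        exact hb
  -- claim A0: same starting from the initial policy when it is cross at u
  have clA0 : ¬ M.T u (π 0 u) = u → ∀ j, j ∈ TC →
      (∀ m ∈ Cu, m < j → m ∈ TC) → M.R u (π 0 u) < M.R u (π (j + 1) u) := by
    intro h0 j
    induction j using Nat.strong_induction_on with
    | _ j ih =>
      intro hj hbet
      have hjl : j < ℓ := ((hCuMem j).mp (hTCmem j hj).1).1
      by_cases hne : (Cu.filter fun x => x < j).Nonempty
      · obtain ⟨m, hmmem, hmmax⟩ : ∃ m, m ∈ Cu.filter (fun x => x < j) ∧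
            ∀ x ∈ Cu.filter (fun x => x < j), x ≤ m :=
          ⟨_, Finset.max'_mem _ hne, fun x hx => Finset.le_max' _ x hx⟩
        rw [Finset.mem_filter] at hmmem
        have hmCu := hmmem.1
        have hmj : m < j := hmmem.2
        have hmTC : m ∈ TC := hbet m hmCu hmj
        have ha : M.R u (π 0 u) < M.R u (π (m + 1) u) :=
          ih m hmj hmTC (fun m' hm' h1 => hbet m' hm' (by omega))
        have hst : π j u = π (m + 1) u := by
          apply stable (m + 1) j (by omega) (by omega)
          intro m' hm' ha' hb'
          have := hmmax m' (Finset.mem_filter.mpr ⟨hm', hb'⟩)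
          omega
        have hcross : ¬ M.T u (π j u) = u := by rw [hst]; exact (hTCmem m hmTC).2
        have hb := adj j hj hcross
        rw [hst] at hb
        exact lt_trans ha hb
      · have hst : π j u = π 0 u := by
          apply stable 0 j (by omega) (by omega)
          intro m' hm' h1 h2
          exact hne ⟨m', Finset.mem_filter.mpr ⟨hm', h2⟩⟩
        have hcross : ¬ M.T u (π j u) = u := by rw [hst]; exact h0
        have hb := adj j hj hcross
        rw [hst] at hb
        exact hb
  -- between changes with the same number of loop-changes below, all changes are cross
  have betTC : ∀ i j, i ≤ j →
      (TL.filter fun m => m < i).card = (TL.filter fun m => m < j).card →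
      ∀ m ∈ Cu, i ≤ m → m < j → m ∈ TC := by
    intro i j hij hn m hm h1 h2
    by_contra hmTC
    have hmTL : m ∈ TL := by
      rw [hTL, Finset.mem_filter]
      refine ⟨hm, ?_⟩
      by_contra hc
      exact hmTC (Finset.mem_filter.mpr ⟨hm, hc⟩)
    have hsub : (TL.filter fun m' => m' < i) ⊆ (TL.filter fun m' => m' < j) := by
      intro x hx
      rw [Finset.mem_filter] at hx ⊢
      exact ⟨hx.1, by omega⟩
    have hss : (TL.filter fun m' => m' < i) ⊂ (TL.filter fun m' => m' < j) := by
      rw [Finset.ssubset_iff_of_subset hsub]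
      refine ⟨m, Finset.mem_filter.mpr ⟨hmTL, h2⟩, fun hc => ?_⟩
      have := (Finset.mem_filter.mp hc).2
      omega
    have := Finset.card_lt_card hss
    omega
  have fiber_ne : ∀ i j, i ∈ TC → j ∈ TC → i < j →
      (TL.filter fun m => m < i).card = (TL.filter fun m => m < j).card →
      π (i + 1) u ≠ π (j + 1) u := by
    intro i j hi hj hij hn heq
    have hb : ∀ m ∈ Cu, i < m → m < j → m ∈ TC :=
      fun m hm h1 h2 => betTC i j (by omega) hn m hm (by omega) h2
    have hlt := clA j i hi hj hij hb
    rw [heq] at hlt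
    exact lt_irrefl _ hlt
  have fiber_inj : ∀ n, Set.InjOn (fun i => π (i + 1) u)
      ↑(TC.filter fun i => (TL.filter fun m => m < i).card = n) := by
    intro n i hi j hj heq
    obtain ⟨hiTC, hin⟩ := Finset.mem_filter.mp (Finset.mem_coe.mp hi)
    obtain ⟨hjTC, hjn⟩ := Finset.mem_filter.mp (Finset.mem_coe.mp hj)
    by_contra hne
    rcases lt_or_gt_of_ne hne with h | h
    · exact fiber_ne i j hiTC hjTC h (hin.trans hjn.symm) heq
    · exact fiber_ne j i hjTC hiTC h (hjn.trans hin.symm) heq.symm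
  have fiber_le : ∀ n,
      (TC.filter fun i => (TL.filter fun m => m < i).card = n).card ≤ Cset.card := by
    intro n
    refine Finset.card_le_card_of_injOn (fun i => π (i + 1) u) ?_ (fiber_inj n)
    intro i hi
    exact Finset.mem_filter.mpr
      ⟨Finset.mem_univ _, (hTCmem i (Finset.mem_filter.mp hi).1).2⟩
  have hTCsum : TC.card = ∑ n ∈ Finset.range (TL.card + 1),
      (TC.filter fun i => (TL.filter fun m => m < i).card = n).card := by
    apply Finset.card_eq_sum_card_fiberwise
    intro i _
    exact Finset.mem_range.mpr
      (Nat.lt_succ_of_le (Finset.card_le_card (Finset.filter_subset _ _)))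
  by_cases h0 : M.T u (π 0 u) = u
  · -- initial action at u is a self-loop
    have hmem0 : π 0 u ∈ Lset := Finset.mem_filter.mpr ⟨Finset.mem_univ _, h0⟩
    have hTL1 : TL.card ≤ Lset.card - 1 := by
      have h1 : TL.card ≤ (Lset.erase (π 0 u)).card := by
        refine Finset.card_le_card_of_injOn (fun i => π (i + 1) u) ?_ TLinj
        intro j hj
        refine Finset.mem_erase.mpr
          ⟨?_, Finset.mem_filter.mpr ⟨Finset.mem_univ _, (hTLmem j hj).2⟩⟩
        intro heq
        have hjCu := (hTLmem j hj).1
        have hjl : j < ℓ := ((hCuMem j).mp hjCu).1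
        have heqV : M.V (π (j + 1)) u = M.V (π 0) u :=
          stmt18_loop_V_eq M (hTLmem j hj).2 heq.symm
        have hlt := strictij 0 j (j + 1) (by omega) hjCu (by omega) (by omega)
        linarith [heqV]
      rwa [Finset.card_erase_of_mem hmem0] at h1
    have hTCb : TC.card ≤ (TL.card + 1) * Cset.card := by
      rw [hTCsum]
      calc ∑ n ∈ Finset.range (TL.card + 1),
            (TC.filter fun i => (TL.filter fun m => m < i).card = n).card
          ≤ ∑ _n ∈ Finset.range (TL.card + 1), Cset.card :=
            Finset.sum_le_sum (fun n _ => fiber_le n)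
        _ = (TL.card + 1) * Cset.card := by
            rw [Finset.sum_const, Finset.card_range, smul_eq_mul]
    have hP1 : 1 ≤ Lset.card := Finset.card_pos.mpr ⟨_, hmem0⟩
    have hmul : (TL.card + 1) * Cset.card ≤ Lset.card * Cset.card :=
      Nat.mul_le_mul_right _ (by omega)
    obtain ⟨X, hX⟩ : ∃ X, (TL.card + 1) * Cset.card = X := ⟨_, rfl⟩
    obtain ⟨W, hW⟩ : ∃ W, Lset.card * Cset.card = W := ⟨_, rfl⟩
    rw [hX] at hTCb hmul
    rw [hW] at hmul
    rw [hW]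
    omega
  · -- initial action at u is a cross action
    have hmem0 : π 0 u ∈ Cset := Finset.mem_filter.mpr ⟨Finset.mem_univ _, h0⟩
    have hQ1 : 1 ≤ Cset.card := Finset.card_pos.mpr ⟨_, hmem0⟩
    have fiber0_le :
        (TC.filter fun i => (TL.filter fun m => m < i).card = 0).card ≤ Cset.card - 1 := by
      have h1 : (TC.filter fun i => (TL.filter fun m => m < i).card = 0).card
          ≤ (Cset.erase (π 0 u)).card := by
        refine Finset.card_le_card_of_injOn (fun i => π (i + 1) u) ?_ (fiber_inj 0)
        intro i hi
        obtain ⟨hiTC, hin⟩ := Finset.mem_filter.mp hi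
        have hz : (TL.filter fun m => m < (0 : ℕ)) = ∅ := by
          apply Finset.filter_false_of_mem; intro x _; omega
        have hn0 : (TL.filter fun m => m < (0 : ℕ)).card
            = (TL.filter fun m => m < i).card := by
          rw [hz, Finset.card_empty, hin]
        have hbt : ∀ m ∈ Cu, m < i → m ∈ TC :=
          fun m hm hmi => betTC 0 i (by omega) hn0 m hm (by omega) hmi
        refine Finset.mem_erase.mpr ⟨?_,
          Finset.mem_filter.mpr ⟨Finset.mem_univ _, (hTCmem i hiTC).2⟩⟩
        intro heq
        have heq' : π (i + 1) u = π 0 u := heq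
        have hlt := clA0 h0 i hiTC hbt
        rw [heq'] at hlt
        exact lt_irrefl _ hlt
      rwa [Finset.card_erase_of_mem hmem0] at h1
    have hTCb : TC.card ≤ (Cset.card - 1) + TL.card * Cset.card := by
      have hsum := hTCsum
      rw [Finset.sum_range_succ'] at hsum
      have h1 : ∑ n ∈ Finset.range TL.card,
          (TC.filter fun i => (TL.filter fun m => m < i).card = n + 1).card
          ≤ TL.card * Cset.card := by
        calc ∑ n ∈ Finset.range TL.card,
            (TC.filter fun i => (TL.filter fun m => m < i).card = n + 1).card
            ≤ ∑ _n ∈ Finset.range TL.card, Cset.card :=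
              Finset.sum_le_sum (fun n _ => fiber_le (n + 1))
          _ = TL.card * Cset.card := by
              rw [Finset.sum_const, Finset.card_range, smul_eq_mul]
      calc TC.card = _ := hsum
        _ ≤ TL.card * Cset.card + (Cset.card - 1) := Nat.add_le_add h1 fiber0_le
        _ = (Cset.card - 1) + TL.card * Cset.card := Nat.add_comm _ _
    have hmul : TL.card * Cset.card ≤ Lset.card * Cset.card :=
      Nat.mul_le_mul_right _ hTLcard
    obtain ⟨X, hX⟩ : ∃ X, TL.card * Cset.card = X := ⟨_, rfl⟩
    obtain ⟨W, hW⟩ : ∃ W, Lset.card * Cset.card = W := ⟨_, rfl⟩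
    rw [hX] at hTCb hmul
    rw [hW] at hmul
    rw [hW]
    omega

end StmtAux


theorem stmt_18 {S A : Type*} [Fintype S] [Fintype A]
    (M : DMDP S A) (k : ℕ) (hS : Fintype.card S = 2)
    (hA : Fintype.card A = k) (hk : 2 ≤ k)
    (ℓ : ℕ) (π : ℕ → S → A)
    (hchain : ∀ i < ℓ, M.PLt (π i) (π (i + 1)))
    (hstep : ∀ i < ℓ, M.ImpStep (π i) (π (i + 1))) :
    ((ℓ : ℝ) + 1) ≤ (k : ℝ) ^ 2 / 2 + 2 * (k : ℝ) - 1 := by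
  classical
  have hS' : Nat.card S = 2 := by rw [Nat.card_eq_fintype_card, hS]
  obtain ⟨u, v, huv, hcov⟩ := Nat.card_eq_two_iff.mp hS'
  have hcover : ∀ s : S, s = u ∨ s = v := by
    intro s
    have hs' : s ∈ ({u, v} : Set S) := hcov ▸ Set.mem_univ s
    simpa using hs'
  have h1 := stmt18_key M ℓ π hchain hstep u v hcover
  have h2 := stmt18_key M ℓ π hchain hstep v u (fun s => (hcover s).symm)
  rw [hA] at h1 h2
  set Cu := (Finset.range ℓ).filter (fun i => π (i + 1) u ≠ π i u) with hCu
  set Cv := (Finset.range ℓ).filter (fun i => π (i + 1) v ≠ π i v) with hCv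
  set pu := (Finset.univ.filter fun a : A => M.T u a = u).card with hpu
  set qu := (Finset.univ.filter fun a : A => ¬ M.T u a = u).card with hqu
  set pv := (Finset.univ.filter fun a : A => M.T v a = v).card with hpv
  set qv := (Finset.univ.filter fun a : A => ¬ M.T v a = v).card with hqv
  have hpqu : pu + qu = k := by
    rw [hpu, hqu, Finset.card_filter_add_card_filter_not, Finset.card_univ, hA]
  have hpqv : pv + qv = k := by
    rw [hpv, hqv, Finset.card_filter_add_card_filter_not, Finset.card_univ, hA]
  have hsub : Finset.range ℓ ⊆ Cu ∪ Cv := by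
    intro i hi
    have hil : i < ℓ := Finset.mem_range.mp hi
    have hne := (hstep i hil).1
    rcases em (π (i + 1) u = π i u) with h | h
    · have hv : π (i + 1) v ≠ π i v := by
        intro hveq
        apply hne
        funext s
        rcases hcover s with rfl | rfl
        · exact h
        · exact hveq
      exact Finset.mem_union_right _ (Finset.mem_filter.mpr ⟨hi, hv⟩)
    · exact Finset.mem_union_left _ (Finset.mem_filter.mpr ⟨hi, h⟩)
  have hlcard : ℓ ≤ Cu.card + Cv.card := by
    calc ℓ = (Finset.range ℓ).card := (Finset.card_range ℓ).symm
      _ ≤ (Cu ∪ Cv).card := Finset.card_le_card hsub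
      _ ≤ Cu.card + Cv.card := Finset.card_union_le _ _
  have hk1 : (1 : ℕ) ≤ k := by omega
  have c1 : (Cu.card : ℝ) ≤ (k : ℝ) - 1 + (pu : ℝ) * (qu : ℝ) := by
    have h1' : (Cu.card : ℝ) ≤ ((k - 1 + pu * qu : ℕ) : ℝ) := Nat.cast_le.mpr h1
    rwa [Nat.cast_add, Nat.cast_mul, Nat.cast_sub hk1, Nat.cast_one] at h1'
  have c2 : (Cv.card : ℝ) ≤ (k : ℝ) - 1 + (pv : ℝ) * (qv : ℝ) := by
    have h2' : (Cv.card : ℝ) ≤ ((k - 1 + pv * qv : ℕ) : ℝ) := Nat.cast_le.mpr h2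
    rwa [Nat.cast_add, Nat.cast_mul, Nat.cast_sub hk1, Nat.cast_one] at h2'
  have q1 : (pu : ℝ) * (qu : ℝ) ≤ (k : ℝ) ^ 2 / 4 := by
    have hc : (pu : ℝ) + (qu : ℝ) = (k : ℝ) := by exact_mod_cast hpqu
    nlinarith [sq_nonneg ((pu : ℝ) - (qu : ℝ))]
  have q2 : (pv : ℝ) * (qv : ℝ) ≤ (k : ℝ) ^ 2 / 4 := by
    have hc : (pv : ℝ) + (qv : ℝ) = (k : ℝ) := by exact_mod_cast hpqv
    nlinarith [sq_nonneg ((pv : ℝ) - (qv : ℝ))]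
  have hl' : (ℓ : ℝ) ≤ (Cu.card : ℝ) + (Cv.card : ℝ) := by exact_mod_cast hlcard
  linarith
end
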